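/- arXiv:2305.05819 — 2 statements merged into one kernel-verified Lean document; each statement's English description precedes it below -/
import Mathlib

section
/- (Key pointwise estimate of Theorem 1.7) Let n ∈ ℕ, A a positive definite symmetric n×n real matrix, and M a positive semidefinite symmetric n×n real matrix. If tr(A·M) ≤ n·(det A)^{1/(n−1)}, then det M ≤ (det A)^{1/(n−1)}. -/
/-!
Writing `A = Bᴴ B`, the matrix `B M Bᴴ` is positive semidefinite with the trace and determinant of
`A M`, so AM-GM on its eigenvalues gives
`det A · det M ≤ (tr (A M) / n) ^ n ≤ (det A) ^ (n / (n - 1)) = det A · (det A) ^ (1 / (n - 1))`;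
dividing by `det A > 0` gives the claim.
-/

open Finset

theorem Real.prod_le_sum_div_card_pow {ι : Type*} (s : Finset ι) {z : ι → ℝ}
    (hz : ∀ i ∈ s, 0 ≤ z i) : ∏ i ∈ s, z i ≤ ((∑ i ∈ s, z i) / #s) ^ #s := by
  rcases s.eq_empty_or_nonempty with rfl | hs
  · simp
  have hprod : 0 ≤ ∏ i ∈ s, z i := prod_nonneg hz
  have hcard : (0 : ℝ) < #s := by exact_mod_cast hs.card_pos
  have amgm := Real.geom_mean_le_arith_mean s (fun _ ↦ 1) z (fun _ _ ↦ zero_le_one)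
    (by simpa using hs.card_pos) hz
  simp only [Real.rpow_one, sum_const, nsmul_eq_mul, mul_one, one_mul] at amgm
  calc ∏ i ∈ s, z i = ((∏ i ∈ s, z i) ^ ((#s : ℝ)⁻¹)) ^ #s := by
        rw [← Real.rpow_natCast, ← Real.rpow_mul hprod, inv_mul_cancel₀ hcard.ne', Real.rpow_one]
    _ ≤ ((∑ i ∈ s, z i) / #s) ^ #s := by gcongr

namespace Matrix

variable {ι : Type*} [Fintype ι] [DecidableEq ι]

theorem PosSemidef.det_le_trace_div_card_pow {N : Matrix ι ι ℝ} (hN : N.PosSemidef) :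
    N.det ≤ (N.trace / Fintype.card ι) ^ Fintype.card ι := by
  rw [hN.1.det_eq_prod_eigenvalues, hN.1.trace_eq_sum_eigenvalues]
  exact_mod_cast Real.prod_le_sum_div_card_pow univ fun i _ ↦ hN.eigenvalues_nonneg i

open scoped MatrixOrder in
theorem PosSemidef.exists_posSemidef_trace_eq_det_eq {A M : Matrix ι ι ℝ} (hA : A.PosSemidef)
    (hM : M.PosSemidef) :
    ∃ N : Matrix ι ι ℝ, N.PosSemidef ∧ N.trace = (A * M).trace ∧ N.det = A.det * M.det := by
  obtain ⟨B, rfl⟩ := CStarAlgebra.nonneg_iff_eq_star_mul_self.mp hA.nonneg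
  refine ⟨B * M * Bᴴ, hM.mul_mul_conjTranspose_same B, ?_, ?_⟩
  · rw [trace_mul_cycle, star_eq_conjTranspose, Matrix.mul_assoc]
  · simp only [det_mul, star_eq_conjTranspose]; ring

end Matrix

theorem Real.rpow_one_div_sub_one_pow {a : ℝ} (ha : 0 < a) {k : ℕ} (hk : (k : ℝ) ≠ 1) :
    (a ^ (1 / ((k : ℝ) - 1))) ^ k = a * a ^ (1 / ((k : ℝ) - 1)) := by
  have hk' : (k : ℝ) - 1 ≠ 0 := sub_ne_zero.mpr hk
  have hexp : 1 / ((k : ℝ) - 1) * k = 1 + 1 / ((k : ℝ) - 1) := by field_simp; ring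
  rw [← Real.rpow_natCast, ← Real.rpow_mul ha.le, hexp, Real.rpow_add ha, Real.rpow_one]

theorem stmt_16 (n : ℕ) (hn : 2 ≤ n) (A M : Matrix (Fin n) (Fin n) ℝ)
    (hA : A.PosDef) (hM : M.PosSemidef)
    (htr : (A * M).trace ≤ n * A.det ^ ((1 : ℝ) / (n - 1))) :
    M.det ≤ A.det ^ ((1 : ℝ) / (n - 1)) := by
  set c := A.det ^ ((1 : ℝ) / (n - 1))
  have hdetA : 0 < A.det := hA.det_pos
  have hn' : (n : ℝ) ≠ 1 := by norm_cast; omega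
  obtain ⟨N, hN, htrN, hdetN⟩ := hA.posSemidef.exists_posSemidef_trace_eq_det_eq hM
  have hmean : N.trace / n ≤ c := by
    rw [div_le_iff₀ (by positivity), htrN, mul_comm]; exact htr
  have key : A.det * M.det ≤ A.det * c := calc
    A.det * M.det = N.det := hdetN.symm
    _ ≤ (N.trace / n) ^ n := by simpa using hN.det_le_trace_div_card_pow
    _ ≤ c ^ n := by gcongr; exact div_nonneg hN.trace_nonneg n.cast_nonneg
    _ = A.det * c := Real.rpow_one_div_sub_one_pow hdetA hn'
  exact le_of_mul_le_mul_left key hdetA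
end

section
/- For n×n real symmetric matrices: if T is positive definite, S is symmetric, and for all t in some nonempty open interval the matrix S − t·B is positive semidefinite and det(T·(S − t·B)) = (tr(T·(S − t·B))/n)^n, where B is symmetric, then for each such t, T·(S − t·B) = λ(t)·I_n for some λ(t) ≥ 0. -/
/-!
Write `T = R * R` with `R = √T`. Then `T * M = R * (R * M * R) * R⁻¹` is similar to the positive
semidefinite matrix `A = R * M * R`, with the same determinant and trace. The determinant and
trace of `A` are the product and the sum of its nonnegative eigenvalues, so the hypothesis is the
equality case of AM-GM: all eigenvalues equal `tr A / n`. Hence `A`, and with it its conjugate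
`T * M`, is the scalar matrix `tr A / n`.
-/

open Finset
open scoped MatrixOrder ComplexOrder

theorem Real.eq_mean_of_prod_eq_mean_pow {ι : Type*} [Fintype ι] {z : ι → ℝ}
    (hz : ∀ i, 0 ≤ z i) (h : ∏ i, z i = ((∑ i, z i) / Fintype.card ι) ^ Fintype.card ι) (j : ι) :
    z j = (∑ i, z i) / Fintype.card ι := by
  have : Nonempty ι := ⟨j⟩
  have hcard : Fintype.card ι ≠ 0 := Fintype.card_ne_zero
  have hN : (0 : ℝ) < Fintype.card ι := by positivity
  have hmean : ∑ i, (Fintype.card ι : ℝ)⁻¹ * z i = (∑ i, z i) / Fintype.card ι := by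
    rw [← mul_sum, inv_mul_eq_div]
  have hgeom : ∏ i, z i ^ (Fintype.card ι : ℝ)⁻¹ = (∑ i, z i) / Fintype.card ι := by
    rw [Real.finsetProd_rpow _ _ fun i _ ↦ hz i, h,
      Real.pow_rpow_inv_natCast (div_nonneg (sum_nonneg fun i _ ↦ hz i) hN.le) hcard]
  rw [← hmean]
  exact (Real.geom_mean_eq_arith_mean_weighted_iff_of_pos' univ
    (fun _ ↦ (Fintype.card ι : ℝ)⁻¹) z (fun _ _ ↦ inv_pos.mpr hN) (by simp [hN.ne'])
    (fun i _ ↦ hz i)).mp (hgeom.trans hmean.symm) j (mem_univ j)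

namespace Matrix

variable {n 𝕜 : Type*} [Fintype n] [DecidableEq n] [RCLike 𝕜]

theorem IsHermitian.eq_smul_one_of_eigenvalues_eq {A : Matrix n n 𝕜} (hA : A.IsHermitian)
    {c : ℝ} (h : ∀ i, hA.eigenvalues i = c) : A = c • (1 : Matrix n n 𝕜) := by
  calc A = cfc id A := (cfc_id ℝ A).symm
    _ = cfc (fun _ ↦ c) A := cfc_congr <| by
        rintro x hx
        obtain ⟨i, rfl⟩ := hA.spectrum_real_eq_range_eigenvalues ▸ hx
        exact h i
    _ = c • 1 := by rw [cfc_const c A, Algebra.algebraMap_eq_smul_one]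

theorem PosSemidef.eq_smul_one_of_det_eq_trace_div_pow {A : Matrix n n ℝ} (hA : A.PosSemidef)
    (h : A.det = (A.trace / Fintype.card n) ^ Fintype.card n) :
    A = (A.trace / Fintype.card n) • (1 : Matrix n n ℝ) := by
  have htrace : A.trace = ∑ i, hA.isHermitian.eigenvalues i := by
    simpa using hA.isHermitian.trace_eq_sum_eigenvalues
  have hdet : A.det = ∏ i, hA.isHermitian.eigenvalues i := by
    simpa using hA.isHermitian.det_eq_prod_eigenvalues
  refine hA.isHermitian.eq_smul_one_of_eigenvalues_eq fun i ↦ ?_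
  rw [htrace]
  exact Real.eq_mean_of_prod_eq_mean_pow hA.eigenvalues_nonneg (by rwa [← hdet, ← htrace]) i

theorem PosDef.exists_mul_eq_conj_posSemidef {T M : Matrix n n 𝕜} (hT : T.PosDef)
    (hM : M.PosSemidef) :
    ∃ P A : Matrix n n 𝕜, IsUnit P ∧ A.PosSemidef ∧ T * M = P * A * P⁻¹ := by
  set R := CFC.sqrt T
  have hR : Rᴴ = R := (nonneg_iff_posSemidef.mp (CFC.sqrt_nonneg T)).isHermitian
  have hRR : R * R = T := CFC.sqrt_mul_sqrt_self T hT.posSemidef.nonneg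
  have hRunit : IsUnit R := (CFC.isUnit_sqrt_iff T hT.posSemidef.nonneg).mpr hT.isUnit
  refine ⟨R, R * M * R, hRunit, by simpa only [hR] using hM.mul_mul_conjTranspose_same R, ?_⟩
  rw [← hRR, Matrix.mul_assoc, Matrix.mul_assoc, Matrix.mul_assoc,
    mul_nonsing_inv _ ((isUnit_iff_isUnit_det R).mp hRunit), Matrix.mul_one]

theorem PosDef.exists_mul_eq_smul_one_of_det_eq_trace_div_pow {T M : Matrix n n ℝ}
    (hT : T.PosDef) (hM : M.PosSemidef)
    (h : (T * M).det = ((T * M).trace / Fintype.card n) ^ Fintype.card n) :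
    ∃ l : ℝ, 0 ≤ l ∧ T * M = l • (1 : Matrix n n ℝ) := by
  obtain ⟨P, A, hP, hA, hTM⟩ := hT.exists_mul_eq_conj_posSemidef hM
  rw [hTM, det_conj hP, trace_conj hP] at h
  have hA_eq := hA.eq_smul_one_of_det_eq_trace_div_pow h
  set c := A.trace / Fintype.card n
  refine ⟨c, div_nonneg hA.trace_nonneg (Nat.cast_nonneg _), ?_⟩
  rw [hTM, hA_eq, Matrix.mul_smul, Matrix.mul_one, Matrix.smul_mul,
    mul_nonsing_inv _ ((isUnit_iff_isUnit_det P).mp hP)]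

end Matrix

theorem stmt_18_general (n : ℕ) (T S B : Matrix (Fin n) (Fin n) ℝ)
    (hT : T.PosDef)
    (a b : ℝ)
    (hpsd : ∀ t ∈ Set.Ioo a b, (S - t • B).PosSemidef)
    (heq : ∀ t ∈ Set.Ioo a b,
      (T * (S - t • B)).det = ((T * (S - t • B)).trace / n) ^ n) :
    ∀ t ∈ Set.Ioo a b, ∃ l : ℝ, 0 ≤ l ∧
      T * (S - t • B) = l • (1 : Matrix (Fin n) (Fin n) ℝ) := fun t ht ↦
  hT.exists_mul_eq_smul_one_of_det_eq_trace_div_pow (hpsd t ht)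
    (by simpa only [Fintype.card_fin] using heq t ht)

theorem stmt_18 (n : ℕ) (hn : 0 < n) (T S B : Matrix (Fin n) (Fin n) ℝ)
    (hT : T.PosDef) (hS : S.IsSymm) (hB : B.IsSymm)
    (a b : ℝ) (hab : a < b)
    (hpsd : ∀ t ∈ Set.Ioo a b, (S - t • B).PosSemidef)
    (heq : ∀ t ∈ Set.Ioo a b,
      (T * (S - t • B)).det = ((T * (S - t • B)).trace / n) ^ n) :
    ∀ t ∈ Set.Ioo a b, ∃ l : ℝ, 0 ≤ l ∧
      T * (S - t • B) = l • (1 : Matrix (Fin n) (Fin n) ℝ) :=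
  stmt_18_general n T S B hT a b hpsd heq
end
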